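/- arXiv:2011.05001 — 2 statements merged into one kernel-verified Lean document; each statement's English description precedes it below -/
import Mathlib

section
/- Let X be a compact metric space with distance d, and for finite Borel measures α, β on X define the Kantorovich IPM K(α,β) = sup { ∫_X f dα − ∫_X f dβ : f : X → ℝ is 1-Lipschitz }, with values taken in [0,∞]. Let μ, ν be finite Borel measures on X with equal total mass μ(X) = ν(X), and let λ ≥ 1. Then the infimum, taken in [0,∞], over all finite Borel measures π on X × X of ∫_{X×X} d dπ + λ K(π₁, μ) + λ K(π₂, ν) equals K(μ,ν). In other words, the IPM-regularized unbalanced optimal transport problem with Kantorovich regularizer and λ ≥ 1 recovers exactly the Kantorovich metric. -/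
/-!
The lower bound is the triangle inequality for `kantorovich` together with
`K(π₁, π₂) ≤ ∫ d dπ`; since `λ ≥ 1`, the regularisers dominate `K(μ, π₁)` and `K(π₂, ν)`.

For the upper bound, approximate `μ` and `ν` in `K` by atomic measures of the same mass, sitting
at points of a fine measurable partition. Between atomic measures the transport problem is a
finite linear program, and Kantorovich duality holds up to any `ε > 0`: separating `(a, b, t)`
from the compact convex set of (marginals, cost) of all plans of mass `∑ a` yields potentials
`φ`, `ψ` with `φ i + ψ j ≤ d(x i, y j)`, and the c-transform of `ψ` is a `1`-Lipschitz function
on `X`. A nearly optimal plan between the atoms therefore costs at most `K(μ, ν)` plus errors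
that vanish with the mesh.
-/

open MeasureTheory

/-- The Kantorovich IPM: the supremum, in `[0,∞]`, of `∫ f dα − ∫ f dβ` over all
`1`-Lipschitz functions `f : X → ℝ`. -/
noncomputable def kantorovich {X : Type*} [MetricSpace X] [MeasurableSpace X]
    (α β : Measure X) : ENNReal :=
  ⨆ (f : X → ℝ) (_ : LipschitzWith 1 f),
    ENNReal.ofReal (∫ x, f x ∂α - ∫ x, f x ∂β)

open Set Metric Filter Topology Function
open scoped ENNReal

theorem LinearMap.exists_apply_prod_eq_sum {ι κ : Type*} [Fintype ι] [Fintype κ]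
    (L : (ι → ℝ) × (κ → ℝ) × ℝ →ₗ[ℝ] ℝ) :
    ∃ (φ : ι → ℝ) (ψ : κ → ℝ) (τ : ℝ), ∀ y : (ι → ℝ) × (κ → ℝ) × ℝ,
      L y = ∑ i, y.1 i * φ i + ∑ j, y.2.1 j * ψ j + y.2.2 * τ := by
  classical
  refine ⟨fun i => L (fun i' => if i = i' then 1 else 0, 0, 0),
    fun j => L (0, fun j' => if j = j' then 1 else 0, 0), L (0, 0, 1), fun y => ?_⟩
  have hy : y = (y.1, 0, 0) + (0, y.2.1, 0) + y.2.2 • (0, 0, 1) := by ext <;> simp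
  calc L y = L (y.1, 0, 0) + L (0, y.2.1, 0) + y.2.2 * L (0, 0, 1) := by
        rw [← smul_eq_mul, ← L.map_smul, ← map_add, ← map_add, ← hy]
    _ = _ := by
        congr 2
        · exact (L.comp (LinearMap.inl ℝ _ _)).pi_apply_eq_sum_univ y.1
        · exact ((L.comp (LinearMap.inr ℝ _ _)).comp (LinearMap.inl ℝ _ ℝ)).pi_apply_eq_sum_univ
            y.2.1

theorem ENNReal.le_of_forall_pos_le_add_mul {a b c : ℝ≥0∞} (hc : c ≠ ∞)
    (h : ∀ ε : ℝ, 0 < ε → a ≤ b + c * ENNReal.ofReal ε) : a ≤ b := by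
  have hlim : Tendsto (fun ε : ℝ => b + c * ENNReal.ofReal ε) (𝓝[>] 0) (𝓝 b) := by
    have := (ENNReal.continuous_ofReal.tendsto 0).mono_left (nhdsWithin_le_nhds (s := Ioi 0))
    simpa using tendsto_const_nhds.add (ENNReal.Tendsto.const_mul this (Or.inr hc))
  exact ge_of_tendsto hlim (eventually_nhdsWithin_of_forall h)

namespace Transport

open Finset

theorem exists_lipschitzWith_potential {X ι κ : Type*} [PseudoMetricSpace X] [Fintype κ]
    [Nonempty κ] (x : ι → X) (y : κ → X) {φ : ι → ℝ} {ψ : κ → ℝ}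
    (h : ∀ i j, φ i + ψ j ≤ dist (x i) (y j)) :
    ∃ f : X → ℝ, LipschitzWith 1 f ∧ (∀ i, φ i ≤ f (x i)) ∧ ∀ j, f (y j) ≤ -ψ j := by
  set f : X → ℝ := fun z => univ.inf' univ_nonempty fun j => dist z (y j) - ψ j
  refine ⟨f, LipschitzWith.of_le_add fun z w => ?_, fun i => ?_, fun j => ?_⟩
  · obtain ⟨j, -, hj⟩ := exists_mem_eq_inf' univ_nonempty fun j => dist w (y j) - ψ j
    calc f z ≤ dist z (y j) - ψ j := inf'_le _ (mem_univ j)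
      _ ≤ f w + dist z w := by linarith [dist_triangle z w (y j), show f w = _ from hj]
  · exact le_inf' _ _ fun j _ => by linarith [h i j]
  · simpa using inf'_le (fun j' => dist (y j) (y j') - ψ j') (mem_univ j)

variable {ι κ : Type*} [Fintype ι] [Fintype κ] {a : ι → ℝ} {b : κ → ℝ}

def IsCoupling (a : ι → ℝ) (b : κ → ℝ) (P : ι × κ → ℝ) : Prop :=
  (∀ p, 0 ≤ P p) ∧ (∀ i, ∑ j, P (i, j) = a i) ∧ ∀ j, ∑ i, P (i, j) = b j

theorem exists_isCoupling (ha : 0 ≤ a) (hb : 0 ≤ b) (hab : ∑ i, a i = ∑ j, b j) :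
    ∃ P, IsCoupling a b P := by
  rcases eq_or_ne (∑ i, a i) 0 with hM | hM
  · refine ⟨0, fun _ => le_rfl, fun i => ?_, fun j => ?_⟩
    · simp [(sum_eq_zero_iff_of_nonneg fun i _ => ha i).1 hM i (mem_univ i)]
    · simp [(sum_eq_zero_iff_of_nonneg fun j _ => hb j).1 (hab ▸ hM) j (mem_univ j)]
  refine ⟨fun p => a p.1 * b p.2 / ∑ i, a i, fun p => ?_, fun i => ?_, fun j => ?_⟩
  · exact div_nonneg (mul_nonneg (ha p.1) (hb p.2)) (sum_nonneg fun i _ => ha i)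
  · dsimp only
    rw [← sum_div, ← mul_sum, ← hab, mul_div_cancel_right₀ _ hM]
  · dsimp only
    rw [← sum_div, ← sum_mul, mul_div_cancel_left₀ _ hM]

theorem IsCoupling.sum_mul_add {P : ι × κ → ℝ} (hP : IsCoupling a b P) (φ : ι → ℝ)
    (ψ : κ → ℝ) : ∑ p, P p * (φ p.1 + ψ p.2) = ∑ i, a i * φ i + ∑ j, b j * ψ j := by
  simp only [mul_add, sum_add_distrib, Fintype.sum_prod_type]
  rw [sum_comm (f := fun i j => P (i, j) * ψ j)]
  simp only [← sum_mul, hP.2.1, hP.2.2]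

def marginalsAndCost (C : ι × κ → ℝ) : (ι × κ → ℝ) →ₗ[ℝ] (ι → ℝ) × (κ → ℝ) × ℝ where
  toFun Q := (fun i => ∑ j, Q (i, j), fun j => ∑ i, Q (i, j), ∑ p, Q p * C p)
  map_add' Q R := by ext <;> simp [sum_add_distrib, add_mul]
  map_smul' c Q := by ext <;> simp [mul_sum, mul_assoc]

theorem exists_affine_separation_of_lt_cost (C : ι × κ → ℝ) (hM : 0 < ∑ i, a i) {t : ℝ}
    (ht : ∀ P, IsCoupling a b P → t < ∑ p, P p * C p) :
    ∃ (φ : ι → ℝ) (ψ : κ → ℝ) (τ : ℝ), (∀ p, φ p.1 + ψ p.2 + τ * C p < 0) ∧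
      0 < ∑ i, a i * φ i + ∑ j, b j * ψ j + τ * t := by
  classical
  set M := ∑ i, a i
  set K := (M • marginalsAndCost C) '' stdSimplex ℝ (ι × κ)
  have hK : IsCompact K :=
    (isCompact_stdSimplex ℝ _).image (LinearMap.continuous_of_finiteDimensional _)
  have hp : (a, b, t) ∉ K := by
    rintro ⟨Q, ⟨hQ0, -⟩, hQ⟩
    rw [LinearMap.smul_apply, ← map_smul] at hQ
    simp only [marginalsAndCost, LinearMap.coe_mk, AddHom.coe_mk, Prod.mk.injEq] at hQ
    refine (ht (M • Q) ⟨fun p => mul_nonneg hM.le (hQ0 p), fun i => ?_, fun j => ?_⟩).ne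
      hQ.2.2.symm
    · exact congrFun hQ.1 i
    · exact congrFun hQ.2.1 j
  obtain ⟨L, u, hLK, hLp⟩ :=
    geometric_hahn_banach_closed_point ((convex_stdSimplex ℝ _).linear_image _) hK.isClosed hp
  obtain ⟨φ, ψ, τ, hL⟩ := L.toLinearMap.exists_apply_prod_eq_sum
  rw [ContinuousLinearMap.coe_coe] at hL
  refine ⟨fun i => φ i - u / M, ψ, τ, fun ⟨i, j⟩ => ?_, ?_⟩
  · have := hLK _ ⟨Pi.single (i, j) 1, single_mem_stdSimplex ℝ (i, j), rfl⟩
    simp only [marginalsAndCost, LinearMap.smul_apply, LinearMap.coe_mk, AddHom.coe_mk,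
      Pi.single_apply, Prod.mk.injEq, ite_and, sum_ite_irrel, sum_ite_eq', Finset.mem_univ,
      ↓reduceIte, sum_const_zero, ite_mul, one_mul, zero_mul, Prod.smul_mk, smul_eq_mul, hL,
      Pi.smul_apply, mul_ite, mul_one, mul_zero] at this
    have : φ i + ψ j + τ * C (i, j) < u / M := by rw [lt_div_iff₀ hM]; linarith
    dsimp only
    linarith
  · have hsum : ∑ i, a i * (u / M) = u := by rw [← sum_mul, mul_div_cancel₀ _ hM.ne']
    have := hL (a, b, t) ▸ hLp
    simp only [mul_sub, sum_sub_distrib, hsum]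
    linarith

theorem exists_potentials_of_lt_cost (C : ι × κ → ℝ) (ha : 0 ≤ a) (hb : 0 ≤ b)
    (hab : ∑ i, a i = ∑ j, b j) (hM : 0 < ∑ i, a i) {t : ℝ}
    (ht : ∀ P, IsCoupling a b P → t < ∑ p, P p * C p) :
    ∃ (φ : ι → ℝ) (ψ : κ → ℝ), (∀ p, φ p.1 + ψ p.2 ≤ C p) ∧
      t < ∑ i, a i * φ i + ∑ j, b j * ψ j := by
  obtain ⟨φ, ψ, τ, hφψ, hpos⟩ := exists_affine_separation_of_lt_cost C hM ht
  obtain ⟨P, hP⟩ := exists_isCoupling ha hb hab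
  have hτ : τ < 0 := by
    have hle : ∑ i, a i * φ i + ∑ j, b j * ψ j ≤ -τ * ∑ p, P p * C p := by
      rw [← hP.sum_mul_add, mul_sum]
      exact sum_le_sum fun p _ => by nlinarith [hP.1 p, hφψ p]
    refine neg_of_mul_pos_left (b := t - ∑ p, P p * C p) ?_ (sub_nonpos.2 (ht P hP).le)
    linarith
  have hT : 0 < -τ := neg_pos.2 hτ
  refine ⟨fun i => φ i / -τ, fun j => ψ j / -τ, fun p => ?_, ?_⟩
  · rw [← add_div, div_le_iff₀ hT]
    linarith [hφψ p]
  · simp only [mul_div_assoc', ← sum_div, ← add_div, lt_div_iff₀ hT]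
    linarith

theorem exists_isCoupling_sum_mul_dist_le {X : Type*} [PseudoMetricSpace X] (x : ι → X)
    (y : κ → X) (ha : 0 ≤ a) (hb : 0 ≤ b) (hab : ∑ i, a i = ∑ j, b j) {ε : ℝ} (hε : 0 < ε) :
    ∃ P, IsCoupling a b P ∧ ∃ f : X → ℝ, LipschitzWith 1 f ∧
      ∑ p, P p * dist (x p.1) (y p.2) ≤ ∑ i, a i * f (x i) - ∑ j, b j * f (y j) + ε := by
  rcases (sum_nonneg fun i _ => ha i).eq_or_lt with hM | hM
  · have ha0 : a = 0 := funext fun i =>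
      (sum_eq_zero_iff_of_nonneg fun i _ => ha i).1 hM.symm i (mem_univ i)
    have hb0 : b = 0 := funext fun j =>
      (sum_eq_zero_iff_of_nonneg fun j _ => hb j).1 (hab ▸ hM.symm) j (mem_univ j)
    exact ⟨0, ⟨fun _ => le_rfl, by simp [ha0], by simp [hb0]⟩, 0, LipschitzWith.const' 0,
      by simp [hε.le]⟩
  have : Nonempty κ := by
    by_contra h
    simp [hab, not_nonempty_iff.1 h] at hM
  set cost := fun P : ι × κ → ℝ => ∑ p, P p * dist (x p.1) (y p.2)
  have hbdd : BddBelow (cost '' {P | IsCoupling a b P}) := ⟨0, by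
    rintro _ ⟨P, hP, rfl⟩
    exact sum_nonneg fun p _ => mul_nonneg (hP.1 p) dist_nonneg⟩
  have hne : (cost '' {P | IsCoupling a b P}).Nonempty :=
    let ⟨P, hP⟩ := exists_isCoupling ha hb hab
    ⟨cost P, P, hP, rfl⟩
  set W := sInf (cost '' {P | IsCoupling a b P})
  obtain ⟨_, ⟨P, hP, rfl⟩, hPW⟩ := exists_lt_of_csInf_lt hne (lt_add_of_pos_right W (half_pos hε))
  obtain ⟨φ, ψ, hφψ, hW⟩ := exists_potentials_of_lt_cost (fun p => dist (x p.1) (y p.2)) ha hb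
    hab hM (t := W - ε / 2) fun Q hQ => by
      linarith [csInf_le hbdd (mem_image_of_mem cost (show Q ∈ {P | IsCoupling a b P} from hQ))]
  obtain ⟨f, hf, hφf, hfψ⟩ := exists_lipschitzWith_potential x y fun i j => hφψ (i, j)
  have h₁ : ∑ i, a i * φ i ≤ ∑ i, a i * f (x i) :=
    sum_le_sum fun i _ => mul_le_mul_of_nonneg_left (hφf i) (ha i)
  have h₂ : ∑ j, b j * ψ j ≤ -∑ j, b j * f (y j) := by
    rw [← sum_neg_distrib]
    exact sum_le_sum fun j _ => by
      rw [← mul_neg]; exact mul_le_mul_of_nonneg_left (le_neg_of_le_neg (hfψ j)) (hb j)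
  exact ⟨P, hP, f, hf, by linarith⟩

end Transport

open Transport

section Kantorovich

variable {X : Type*} [MetricSpace X] [MeasurableSpace X]

theorem ofReal_integral_sub_le_kantorovich (α β : Measure X) {f : X → ℝ}
    (hf : LipschitzWith 1 f) : ENNReal.ofReal (∫ x, f x ∂α - ∫ x, f x ∂β) ≤ kantorovich α β :=
  le_iSup₂ (f := fun (f : X → ℝ) (_ : LipschitzWith 1 f) =>
    ENNReal.ofReal (∫ x, f x ∂α - ∫ x, f x ∂β)) f hf

theorem kantorovich_le_ofReal {α β : Measure X} {r : ℝ}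
    (h : ∀ f : X → ℝ, LipschitzWith 1 f → ∫ x, f x ∂α - ∫ x, f x ∂β ≤ r) :
    kantorovich α β ≤ ENNReal.ofReal r :=
  iSup₂_le fun f hf => ENNReal.ofReal_le_ofReal (h f hf)

theorem kantorovich_comm (α β : Measure X) : kantorovich α β = kantorovich β α := by
  suffices ∀ α β : Measure X, kantorovich α β ≤ kantorovich β α from
    le_antisymm (this α β) (this β α)
  intro α β
  refine iSup₂_le fun f hf => ?_
  have h : ∫ x, f x ∂α - ∫ x, f x ∂β = ∫ x, (-f) x ∂β - ∫ x, (-f) x ∂α := by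
    simp only [Pi.neg_apply, integral_neg]; ring
  exact h ▸ ofReal_integral_sub_le_kantorovich β α hf.neg

theorem kantorovich_le_add (α β γ : Measure X) :
    kantorovich α γ ≤ kantorovich α β + kantorovich β γ :=
  iSup₂_le fun f hf => calc
    ENNReal.ofReal (∫ x, f x ∂α - ∫ x, f x ∂γ)
        = ENNReal.ofReal ((∫ x, f x ∂α - ∫ x, f x ∂β) + (∫ x, f x ∂β - ∫ x, f x ∂γ)) := by
          ring_nf
    _ ≤ _ := ENNReal.ofReal_add_le
    _ ≤ _ := add_le_add (ofReal_integral_sub_le_kantorovich α β hf)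
          (ofReal_integral_sub_le_kantorovich β γ hf)

noncomputable def regularizedTransportCost (lam : ℝ) (μ ν : Measure X) (π : Measure (X × X)) :
    ℝ≥0∞ :=
  ENNReal.ofReal (∫ z, dist z.1 z.2 ∂π) + ENNReal.ofReal lam * kantorovich π.fst μ
    + ENNReal.ofReal lam * kantorovich π.snd ν

variable [CompactSpace X] [OpensMeasurableSpace X]

theorem kantorovich_fst_snd_le (π : Measure (X × X)) [IsFiniteMeasure π] :
    kantorovich π.fst π.snd ≤ ENNReal.ofReal (∫ z, dist z.1 z.2 ∂π) := by
  refine kantorovich_le_ofReal fun f hf => ?_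
  have hint {g : X × X → ℝ} (hg : Continuous g) : Integrable g π :=
    hg.integrable_of_hasCompactSupport (.of_compactSpace g)
  have hfc := hf.continuous
  have h₁ : Integrable (fun z => f z.1) π := hint (hfc.comp continuous_fst)
  have h₂ : Integrable (fun z => f z.2) π := hint (hfc.comp continuous_snd)
  rw [Measure.fst, Measure.snd,
    integral_map measurable_fst.aemeasurable hfc.aestronglyMeasurable,
    integral_map measurable_snd.aemeasurable hfc.aestronglyMeasurable, ← integral_sub h₁ h₂]
  refine integral_mono (h₁.sub h₂) (hint (continuous_fst.dist continuous_snd)) fun z => ?_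
  simpa [add_comm] using hf.le_add_mul z.1 z.2

theorem kantorovich_le_regularizedTransportCost {lam : ℝ} (hlam : 1 ≤ lam) (μ ν : Measure X)
    (π : Measure (X × X)) [IsFiniteMeasure π] :
    kantorovich μ ν ≤ regularizedTransportCost lam μ ν π := by
  have hlam' : (1 : ℝ≥0∞) ≤ ENNReal.ofReal lam := ENNReal.one_le_ofReal.2 hlam
  calc kantorovich μ ν
      ≤ kantorovich μ π.fst + kantorovich π.fst π.snd + kantorovich π.snd ν :=
        (kantorovich_le_add _ π.snd _).trans (add_le_add_left (kantorovich_le_add _ _ _) _)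
    _ ≤ ENNReal.ofReal lam * kantorovich π.fst μ + ENNReal.ofReal (∫ z, dist z.1 z.2 ∂π)
          + ENNReal.ofReal lam * kantorovich π.snd ν := by
        gcongr
        · rw [kantorovich_comm]; exact le_mul_of_one_le_left' hlam'
        · exact kantorovich_fst_snd_le π
        · exact le_mul_of_one_le_left' hlam'
    _ = regularizedTransportCost lam μ ν π := by
        rw [regularizedTransportCost, add_comm (ENNReal.ofReal lam * _)]

end Kantorovich

section Atomic

variable {Z ι κ : Type*} [MeasurableSpace Z] [Fintype ι] [Fintype κ]

noncomputable def atomicMeasure (z : ι → Z) (w : ι → ℝ) : Measure Z :=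
  ∑ i, ENNReal.ofReal (w i) • Measure.dirac (z i)

instance (z : ι → Z) (w : ι → ℝ) : IsFiniteMeasure (atomicMeasure z w) := by
  have (i : ι) := (Measure.dirac (z i)).smul_finite (ENNReal.ofReal_ne_top (r := w i))
  unfold atomicMeasure
  infer_instance

theorem integral_atomicMeasure [MeasurableSingletonClass Z] (z : ι → Z) {w : ι → ℝ} (hw : 0 ≤ w)
    (g : Z → ℝ) : ∫ u, g u ∂atomicMeasure z w = ∑ i, w i * g (z i) := by
  rw [atomicMeasure, integral_finsetSum_measure fun i _ =>
    (integrable_dirac enorm_lt_top).smul_measure ENNReal.ofReal_ne_top]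
  simp [integral_smul_measure, integral_dirac, ENNReal.toReal_ofReal (hw _)]

theorem Transport.IsCoupling.fst_atomicMeasure {X Y : Type*} [MeasurableSpace X]
    [MeasurableSpace Y] {a : ι → ℝ} {b : κ → ℝ} {P : ι × κ → ℝ} (hP : IsCoupling a b P)
    (x : ι → X) (y : κ → Y) :
    (atomicMeasure (fun p => (x p.1, y p.2)) P).fst = atomicMeasure x a := by
  rw [Measure.fst, atomicMeasure, Measure.map_finset_sum measurable_fst.aemeasurable]
  simp only [Measure.map_smul, Measure.map_dirac' measurable_fst, Fintype.sum_prod_type]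
  simp only [← Finset.sum_smul, ← ENNReal.ofReal_sum_of_nonneg fun j _ => hP.1 (_, j), hP.2.1]
  rfl

theorem Transport.IsCoupling.snd_atomicMeasure {X Y : Type*} [MeasurableSpace X]
    [MeasurableSpace Y] {a : ι → ℝ} {b : κ → ℝ} {P : ι × κ → ℝ} (hP : IsCoupling a b P)
    (x : ι → X) (y : κ → Y) :
    (atomicMeasure (fun p => (x p.1, y p.2)) P).snd = atomicMeasure y b := by
  rw [Measure.snd, atomicMeasure, Measure.map_finset_sum measurable_snd.aemeasurable]
  simp only [Measure.map_smul, Measure.map_dirac' measurable_snd, Fintype.sum_prod_type_right]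
  simp only [← Finset.sum_smul, ← ENNReal.ofReal_sum_of_nonneg fun i _ => hP.1 (i, _), hP.2.2]
  rfl

end Atomic

section Discretization

variable {X ι κ : Type*} [MetricSpace X] [MeasurableSpace X] [OpensMeasurableSpace X]
  [Fintype ι] [Fintype κ]

theorem exists_plan_integral_dist_le_kantorovich (x : ι → X) (y : κ → X) {a : ι → ℝ}
    {b : κ → ℝ} (ha : 0 ≤ a) (hb : 0 ≤ b) (hab : ∑ i, a i = ∑ j, b j) {ε : ℝ} (hε : 0 < ε) :
    ∃ π : Measure (X × X), IsFiniteMeasure π ∧ π.fst = atomicMeasure x a ∧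
      π.snd = atomicMeasure y b ∧ ENNReal.ofReal (∫ z, dist z.1 z.2 ∂π)
        ≤ kantorovich (atomicMeasure x a) (atomicMeasure y b) + ENNReal.ofReal ε := by
  obtain ⟨P, hP, f, hf, hcost⟩ := exists_isCoupling_sum_mul_dist_le x y ha hb hab hε
  refine ⟨atomicMeasure (fun p => (x p.1, y p.2)) P, inferInstance, ?_, ?_, ?_⟩
  · exact hP.fst_atomicMeasure x y
  · exact hP.snd_atomicMeasure x y
  rw [integral_atomicMeasure (fun p => (x p.1, y p.2)) hP.1 fun z : X × X => dist z.1 z.2]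
  calc ENNReal.ofReal (∑ p, P p * dist (x p.1) (y p.2))
      ≤ ENNReal.ofReal ((∫ z, f z ∂atomicMeasure x a - ∫ z, f z ∂atomicMeasure y b) + ε) := by
        rw [integral_atomicMeasure x ha, integral_atomicMeasure y hb]
        exact ENNReal.ofReal_le_ofReal hcost
    _ ≤ _ := ENNReal.ofReal_add_le.trans
        (add_le_add_left (ofReal_integral_sub_le_kantorovich _ _ hf) _)

variable [CompactSpace X]

theorem kantorovich_atomicMeasure_le (μ : Measure X) [IsFiniteMeasure μ] {c : ι → X}
    {A : ι → Set X} (hA : ∀ i, MeasurableSet (A i)) (hdisj : Pairwise (Disjoint on A))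
    (hcover : ⋃ i, A i = univ) {δ : ℝ} (hsub : ∀ i, A i ⊆ closedBall (c i) δ) :
    kantorovich (atomicMeasure c fun i => μ.real (A i)) μ ≤ ENNReal.ofReal (δ * μ.real univ) := by
  refine kantorovich_le_ofReal fun f hf => ?_
  have hfi : Integrable f μ := hf.continuous.integrable_of_hasCompactSupport (.of_compactSpace f)
  have hcell (i : ι) : μ.real (A i) * f (c i) - ∫ z in A i, f z ∂μ ≤ δ * μ.real (A i) := by
    have hc : IntegrableOn (fun _ => f (c i)) (A i) μ := integrableOn_const
    rw [← smul_eq_mul, ← setIntegral_const, ← integral_sub hc hfi.integrableOn, mul_comm,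
      ← smul_eq_mul, ← setIntegral_const]
    refine setIntegral_mono_on (hc.sub hfi.integrableOn) integrableOn_const (hA i) fun z hz => ?_
    have h₁ : f (c i) ≤ f z + dist (c i) z := by simpa using hf.le_add_mul (c i) z
    have h₂ : dist (c i) z ≤ δ := mem_closedBall'.1 (hsub i hz)
    linarith
  calc ∫ z, f z ∂atomicMeasure c (fun i => μ.real (A i)) - ∫ z, f z ∂μ
      = ∑ i, (μ.real (A i) * f (c i) - ∫ z in A i, f z ∂μ) := by
        rw [integral_atomicMeasure c (fun _ => measureReal_nonneg), Finset.sum_sub_distrib,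
          ← integral_iUnion_fintype hA hdisj fun _ => hfi.integrableOn, hcover, setIntegral_univ]
    _ ≤ ∑ i, δ * μ.real (A i) := Finset.sum_le_sum fun i _ => hcell i
    _ = δ * μ.real univ := by rw [← Finset.mul_sum, ← measureReal_iUnion_fintype hdisj hA, hcover]

theorem exists_measurable_partition_subset_closedBall {δ : ℝ} (hδ : 0 < δ) :
    ∃ (n : ℕ) (c : Fin n → X) (A : Fin n → Set X), (∀ i, MeasurableSet (A i)) ∧
      Pairwise (Disjoint on A) ∧ ⋃ i, A i = univ ∧ ∀ i, A i ⊆ closedBall (c i) δ := by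
  obtain ⟨t, -, ht, hcover⟩ := finite_cover_balls_of_compact (isCompact_univ (X := X)) hδ
  obtain ⟨n, c, -, rfl⟩ := ht.fin_param
  refine ⟨n, c, disjointed fun i => ball (c i) δ,
    fun i => disjointedRec (fun _ _ h => h.diff measurableSet_ball) measurableSet_ball,
    disjoint_disjointed _, ?_, fun i => (disjointed_subset _ i).trans ball_subset_closedBall⟩
  rw [iUnion_disjointed]
  exact univ_subset_iff.1 (by simpa using hcover)

theorem exists_atomicMeasure_kantorovich_le (μ : Measure X) [IsFiniteMeasure μ] {ε : ℝ}
    (hε : 0 < ε) : ∃ (n : ℕ) (c : Fin n → X) (w : Fin n → ℝ), 0 ≤ w ∧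
      ∑ i, w i = μ.real univ ∧ kantorovich (atomicMeasure c w) μ ≤ ENNReal.ofReal ε := by
  have hM : 0 < μ.real univ + 1 := by positivity
  obtain ⟨n, c, A, hA, hdisj, hcover, hsub⟩ :=
    exists_measurable_partition_subset_closedBall (X := X) (div_pos hε hM)
  refine ⟨n, c, fun i => μ.real (A i), fun _ => measureReal_nonneg, ?_,
    (kantorovich_atomicMeasure_le μ hA hdisj hcover hsub).trans (ENNReal.ofReal_le_ofReal ?_)⟩
  · rw [← measureReal_iUnion_fintype hdisj hA, hcover]
  · rw [div_mul_eq_mul_div, div_le_iff₀ hM]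
    nlinarith [measureReal_nonneg (μ := μ) (s := univ)]

end Discretization

theorem exists_regularizedTransportCost_le {X : Type*} [MetricSpace X] [CompactSpace X]
    [MeasurableSpace X] [OpensMeasurableSpace X] (μ ν : Measure X) [IsFiniteMeasure μ]
    [IsFiniteMeasure ν] (hmass : μ univ = ν univ) (lam : ℝ) {ε : ℝ} (hε : 0 < ε) :
    ∃ π : Measure (X × X), IsFiniteMeasure π ∧ regularizedTransportCost lam μ ν π
      ≤ kantorovich μ ν + (3 + 2 * ENNReal.ofReal lam) * ENNReal.ofReal ε := by
  obtain ⟨n, x, a, ha, hsa, hα⟩ := exists_atomicMeasure_kantorovich_le μ hε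
  obtain ⟨m, y, b, hb, hsb, hβ⟩ := exists_atomicMeasure_kantorovich_le ν hε
  obtain ⟨π, hπ, hfst, hsnd, hcost⟩ := exists_plan_integral_dist_le_kantorovich x y ha hb
    (by rw [hsa, hsb, measureReal_def, measureReal_def, hmass]) hε
  refine ⟨π, hπ, ?_⟩
  rw [regularizedTransportCost, hfst, hsnd]
  set α := atomicMeasure x a
  set β := atomicMeasure y b
  have hβ' : kantorovich ν β ≤ ENNReal.ofReal ε := kantorovich_comm ν β ▸ hβ
  calc ENNReal.ofReal (∫ z, dist z.1 z.2 ∂π) + ENNReal.ofReal lam * kantorovich α μ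
        + ENNReal.ofReal lam * kantorovich β ν
      ≤ kantorovich α μ + kantorovich μ ν + kantorovich ν β + ENNReal.ofReal ε
        + ENNReal.ofReal lam * kantorovich α μ + ENNReal.ofReal lam * kantorovich β ν := by
        gcongr
        refine hcost.trans ?_
        gcongr
        exact (kantorovich_le_add _ ν _).trans (by gcongr; exact kantorovich_le_add _ μ _)
    _ ≤ ENNReal.ofReal ε + kantorovich μ ν + ENNReal.ofReal ε + ENNReal.ofReal ε
        + ENNReal.ofReal lam * ENNReal.ofReal ε + ENNReal.ofReal lam * ENNReal.ofReal ε := by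
        gcongr
    _ = kantorovich μ ν + (3 + 2 * ENNReal.ofReal lam) * ENNReal.ofReal ε := by ring

/-- For finite Borel measures `μ, ν` of equal total mass and `λ ≥ 1`,
the Kantorovich-regularized unbalanced OT problem recovers exactly the Kantorovich
metric: the infimum over all finite Borel plans `π` of
`∫ d dπ + λ K(π₁,μ) + λ K(π₂,ν)` equals `K(μ,ν)`. -/
theorem kantorovich_regularized_ot_eq_kantorovich
    {X : Type*} [MetricSpace X] [CompactSpace X] [MeasurableSpace X] [BorelSpace X]
    (μ ν : Measure X) [IsFiniteMeasure μ] [IsFiniteMeasure ν]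
    (hmass : μ Set.univ = ν Set.univ)
    (lam : ℝ) (hlam : 1 ≤ lam) :
    (⨅ (π : Measure (X × X)) (_ : IsFiniteMeasure π),
        ENNReal.ofReal (∫ z, dist z.1 z.2 ∂π)
          + ENNReal.ofReal lam * kantorovich π.fst μ
          + ENNReal.ofReal lam * kantorovich π.snd ν)
    = kantorovich μ ν := by
  refine le_antisymm ?_ (le_iInf₂ fun π _ => kantorovich_le_regularizedTransportCost hlam μ ν π)
  refine ENNReal.le_of_forall_pos_le_add_mul (c := 3 + 2 * ENNReal.ofReal lam) (by finiteness)
    fun ε hε => ?_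
  obtain ⟨π, hπ, hcost⟩ := exists_regularizedTransportCost_le μ ν hmass lam hε
  exact iInf₂_le_of_le π hπ hcost
end

section
/- Let X be a compact metric space and let G ⊆ C(X,ℝ) be a set of continuous real-valued functions that is absolutely convex, pointwise bounded (for every x ∈ X the set {f(x) : f ∈ G} is bounded), and closed in the supremum-norm topology. Suppose in addition that the IPM γ_G is continuous with respect to weak convergence of finite measures: for all sequences of finite Borel measures μ_n → μ and ν_n → ν converging weakly, γ_G(μ_n, ν_n) → γ_G(μ, ν) (values taken in [0,∞]). Then G is a compact subset of C(X,ℝ) in the supremum-norm topology. -/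
/-!
Testing `γ_G` on Dirac masses gives `γ_G(δ_y, δ_x) = sup_{f ∈ G} |f y - f x|`, so continuity of
`γ_G` at the pair `(δ_x, δ_x)` along `δ_{x_n} → δ_x` is exactly equicontinuity of `G` at `x`.
On a compact space an equicontinuous, pointwise bounded family is uniformly bounded, and the
Arzelà–Ascoli theorem then makes the closed set `G` compact.
-/

open MeasureTheory Filter Topology

/-- The integral probability metric generated by a set `G` of continuous functions,
with the supremum taken in `[0,∞]`. -/
noncomputable def ipm {X : Type*} [MeasurableSpace X] [TopologicalSpace X]
    (G : Set C(X, ℝ)) (μ ν : Measure X) : ENNReal :=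
  ⨆ f ∈ G, ENNReal.ofReal |∫ x, f x ∂μ - ∫ x, f x ∂ν|

section IPM

variable {X : Type*} [MeasurableSpace X] [TopologicalSpace X]

theorem ipm_self (G : Set C(X, ℝ)) (μ : Measure X) : ipm G μ μ = 0 := by
  simp [ipm]

theorem ipm_dirac_dirac [MeasurableSingletonClass X] (G : Set C(X, ℝ)) (x y : X) :
    ipm G (Measure.dirac x) (Measure.dirac y) = ⨆ f ∈ G, ENNReal.ofReal |f x - f y| := by
  simp only [ipm, integral_dirac]

theorem ofReal_abs_sub_le_ipm_dirac [MeasurableSingletonClass X] {G : Set C(X, ℝ)}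
    {f : C(X, ℝ)} (hf : f ∈ G) (x y : X) :
    ENNReal.ofReal |f x - f y| ≤ ipm G (Measure.dirac x) (Measure.dirac y) :=
  ipm_dirac_dirac G x y ▸ le_iSup₂ (f := fun g (_ : g ∈ G) ↦ ENNReal.ofReal |g x - g y|) f hf

theorem tendsto_integral_dirac [MeasurableSingletonClass X] {ι : Type*} {l : Filter ι}
    {u : ι → X} {x : X} (hu : Tendsto u l (𝓝 x)) (f : C(X, ℝ)) :
    Tendsto (fun n ↦ ∫ z, f z ∂Measure.dirac (u n)) l (𝓝 (∫ z, f z ∂Measure.dirac x)) := by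
  simp only [integral_dirac]
  exact (f.continuous.tendsto x).comp hu

theorem equicontinuous_of_tendsto_ipm_dirac [MeasurableSingletonClass X] {G : Set C(X, ℝ)}
    (h : ∀ x, Tendsto (fun y ↦ ipm G (Measure.dirac y) (Measure.dirac x)) (𝓝 x) (𝓝 0)) :
    Equicontinuous fun f : G ↦ ⇑(f : C(X, ℝ)) := by
  intro x
  rw [Metric.equicontinuousAt_iff_right]
  intro ε hε
  filter_upwards [(h x).eventually_lt_const (ENNReal.ofReal_pos.mpr hε)] with y hy f
  have hle := (ofReal_abs_sub_le_ipm_dirac f.2 y x).trans_lt hy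
  rw [ENNReal.ofReal_lt_ofReal_iff hε] at hle
  rwa [dist_comm, Real.dist_eq]

end IPM

theorem Equicontinuous.exists_forall_abs_le {X ι : Type*} [TopologicalSpace X] [CompactSpace X]
    {F : ι → X → ℝ} (hF : Equicontinuous F) (hb : ∀ x, ∃ M, ∀ i, |F i x| ≤ M) :
    ∃ M, ∀ i x, |F i x| ≤ M := by
  choose M hM using hb
  have hnhds : ∀ x, {y | ∀ i, dist (F i x) (F i y) < 1} ∈ 𝓝 x := fun x ↦
    Metric.equicontinuousAt_iff_right.mp (hF x) 1 one_pos
  obtain ⟨t, -, ht⟩ := isCompact_univ.elim_nhds_subcover _ fun x _ ↦ hnhds x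
  obtain ⟨C, hC⟩ := (t.finite_toSet.image M).bddAbove
  refine ⟨C + 1, fun i y ↦ ?_⟩
  obtain ⟨x, hx, hxy⟩ := Set.mem_iUnion₂.mp (ht (Set.mem_univ y))
  have hMC : M x ≤ C := hC (Set.mem_image_of_mem M hx)
  have hxy' : |F i y| - |F i x| ≤ dist (F i x) (F i y) := by
    rw [dist_comm, Real.dist_eq]; exact abs_sub_abs_le_abs_sub _ _
  linarith [hM x i, hxy i]

theorem ContinuousMap.isCompact_of_equicontinuous_of_abs_le {X : Type*} [TopologicalSpace X]
    [CompactSpace X] {S : Set C(X, ℝ)} (hS : IsClosed S)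
    (hequi : Equicontinuous fun f : S ↦ ⇑(f : C(X, ℝ))) {M : ℝ}
    (hM : ∀ f ∈ S, ∀ x, |f x| ≤ M) : IsCompact S := by
  let e := ContinuousMap.isometryEquivBoundedOfCompact X ℝ
  rw [← e.toHomeomorph.isCompact_image]
  refine BoundedContinuousFunction.arzela_ascoli₂ (Set.Icc (-M) M) isCompact_Icc _
    (e.toHomeomorph.isClosedMap S hS) ?_ ?_
  · rintro _ x ⟨f, hf, rfl⟩
    exact abs_le.mp (hM f hf x)
  · have hsymm : ∀ g : e.toHomeomorph '' S, e.symm g ∈ S := by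
      rintro ⟨_, f, hf, rfl⟩
      simpa using hf
    exact hequi.comp fun g : e.toHomeomorph '' S ↦ ⟨e.symm g, hsymm g⟩

theorem generating_set_compact_general
    {X : Type*} [MetricSpace X] [CompactSpace X] [MeasurableSpace X] [BorelSpace X]
    (G : Set C(X, ℝ))
    (hptbdd : ∀ x : X, ∃ M : ℝ, ∀ f ∈ G, |f x| ≤ M)
    (hclosed : IsClosed G)
    (hcont : ∀ (μn νn : ℕ → Measure X) (μ ν : Measure X),
      (∀ n, IsFiniteMeasure (μn n)) → (∀ n, IsFiniteMeasure (νn n)) →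
      IsFiniteMeasure μ → IsFiniteMeasure ν →
      (∀ f : C(X, ℝ), Tendsto (fun n => ∫ x, f x ∂(μn n)) atTop (𝓝 (∫ x, f x ∂μ))) →
      (∀ f : C(X, ℝ), Tendsto (fun n => ∫ x, f x ∂(νn n)) atTop (𝓝 (∫ x, f x ∂ν))) →
      Tendsto (fun n => ipm G (μn n) (νn n)) atTop (𝓝 (ipm G μ ν))) :
    IsCompact G := by
  have hequi : Equicontinuous fun f : G ↦ ⇑(f : C(X, ℝ)) := by
    refine equicontinuous_of_tendsto_ipm_dirac fun x ↦ tendsto_nhds_iff_seq_tendsto.mpr ?_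
    intro u hu
    simpa only [Function.comp_def, ipm_self] using
      hcont (fun n ↦ Measure.dirac (u n)) (fun _ ↦ Measure.dirac x) _ _ (fun _ ↦ inferInstance)
        (fun _ ↦ inferInstance) inferInstance inferInstance (tendsto_integral_dirac hu)
        (fun _ ↦ tendsto_const_nhds)
  obtain ⟨M, hM⟩ := hequi.exists_forall_abs_le fun x ↦
    (hptbdd x).imp fun M hM f ↦ hM f f.2
  exact ContinuousMap.isCompact_of_equicontinuous_of_abs_le hclosed hequi
    fun f hf x ↦ hM ⟨f, hf⟩ x

/-- If `G ⊆ C(X,ℝ)` (`X` compact metric) is absolutely convex,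
pointwise bounded and closed in the sup-norm topology, and the IPM `γ_G` is
continuous with respect to weak convergence of finite measures, then `G` is compact
in the sup-norm topology. -/
theorem generating_set_compact
    {X : Type*} [MetricSpace X] [CompactSpace X] [MeasurableSpace X] [BorelSpace X]
    (G : Set C(X, ℝ))
    (habsconv : ∀ f ∈ G, ∀ g ∈ G, ∀ a b : ℝ, |a| + |b| ≤ 1 → a • f + b • g ∈ G)
    (hptbdd : ∀ x : X, ∃ M : ℝ, ∀ f ∈ G, |f x| ≤ M)
    (hclosed : IsClosed G)
    (hcont : ∀ (μn νn : ℕ → Measure X) (μ ν : Measure X),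
      (∀ n, IsFiniteMeasure (μn n)) → (∀ n, IsFiniteMeasure (νn n)) →
      IsFiniteMeasure μ → IsFiniteMeasure ν →
      (∀ f : C(X, ℝ), Tendsto (fun n => ∫ x, f x ∂(μn n)) atTop (𝓝 (∫ x, f x ∂μ))) →
      (∀ f : C(X, ℝ), Tendsto (fun n => ∫ x, f x ∂(νn n)) atTop (𝓝 (∫ x, f x ∂ν))) →
      Tendsto (fun n => ipm G (μn n) (νn n)) atTop (𝓝 (ipm G μ ν))) :
    IsCompact G :=
  generating_set_compact_general G hptbdd hclosed hcont
end
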